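/- arXiv:2008.01680 — 2 statements merged into one kernel-verified Lean document; each statement's English description precedes it below -/
import Mathlib

section
/- In the fixed-game matching setting with n ≥ 2, assume S and T are nonempty convex subsets of real topological vector spaces, U and V are continuous, U(·,t) is q-concave for every t ∈ T, and V(s,·) is q-concave for every s ∈ S. Let (s,t) ∈ S×T be Pareto optimal in G and let μ be any matching. Then the matching profile in which every matched couple plays (s,t) (i.e., x_i = s for all i and y_j = t for all j) is externally stable and internally stable. -/
/-! A Pareto optimal profile admits no blocking pair. If man `i` deviates profitably from `s`
to `s'`, Pareto optimality forces his partner's payoff down. Moving from `s` slightly towards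
`s'` raises the men's payoff (q-concavity of `U`) while the partner of `i` still strictly
prefers the result to her new payoff (continuity of `V`), so any other man and the partner of
`i` block. Deviations of women are symmetric. -/

/-- `f` is q-concave on the convex set `C`: whenever `f s ≥ c` and `f s' > c`,
all strict convex combinations of `s` and `s'` have value `> c`. -/
def QConcaveOn {E : Type*} [AddCommGroup E] [Module ℝ E] (C : Set E) (f : E → ℝ) : Prop :=
  ∀ s ∈ C, ∀ s' ∈ C, ∀ c : ℝ, c ≤ f s → c < f s' →
    ∀ t : ℝ, 0 < t → t < 1 → c < f ((1 - t) • s + t • s')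

/-- A profile `(s,t)` is Pareto optimal in the fixed game over `S × T`. -/
def ParetoOptimalFixed {E F : Type*} (S : Set E) (T : Set F) (U V : E → F → ℝ)
    (s : E) (t : F) : Prop :=
  ¬ ∃ s' ∈ S, ∃ t' ∈ T, U s t ≤ U s' t' ∧ V s t ≤ V s' t' ∧
      (U s t < U s' t' ∨ V s t < V s' t')

/-- External stability in the fixed-game matching setting. -/
def ExtStableFixed {E F : Type*} (S : Set E) (T : Set F) (U V : E → F → ℝ) {n : ℕ}
    (μ : Equiv.Perm (Fin n)) (x : Fin n → E) (y : Fin n → F) : Prop :=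
  ∀ i j : Fin n, μ i ≠ j → ∀ s ∈ S, ∀ t ∈ T,
    ¬ (U (x i) (y (μ i)) < U s t ∧ V (x (μ.symm j)) (y j) < V s t)

/-- Internal stability in the fixed-game matching setting: a profitable unilateral
deviation of a matched agent necessarily breaks external stability. -/
def IntStableFixed {E F : Type*} (S : Set E) (T : Set F) (U V : E → F → ℝ) {n : ℕ}
    (μ : Equiv.Perm (Fin n)) (x : Fin n → E) (y : Fin n → F) : Prop :=
  (∀ i : Fin n, ∀ s ∈ S, U (x i) (y (μ i)) < U s (y (μ i)) →
    ¬ ExtStableFixed S T U V μ (Function.update x i s) y) ∧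
  (∀ j : Fin n, ∀ t ∈ T, V (x (μ.symm j)) (y j) < V (x (μ.symm j)) t →
    ¬ ExtStableFixed S T U V μ x (Function.update y j t))


theorem QConcaveOn.exists_gt_of_continuousOn {E : Type*} [AddCommGroup E] [Module ℝ E]
    [TopologicalSpace E] [ContinuousAdd E] [ContinuousSMul ℝ E] {C : Set E}
    (hC : Convex ℝ C) {f g : E → ℝ} (hf : QConcaveOn C f) (hg : ContinuousOn g C)
    {a b : E} (ha : a ∈ C) (hb : b ∈ C) (hab : f a < f b) {c : ℝ} (hc : c < g a) :
    ∃ z ∈ C, f a < f z ∧ c < g z := by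
  set path : ℝ → E := fun l => (1 - l) • a + l • b
  have hpath : Continuous path := by fun_prop
  have hmaps : Set.MapsTo path (Set.Ioo 0 1) C := fun l hl =>
    hC ha hb (by linarith [hl.2]) hl.1.le (by ring)
  have hpath0 : path 0 = a := by simp [path]
  have hcomp : ContinuousWithinAt (g ∘ path) (Set.Ioo 0 1) 0 :=
    (hg a ha).comp_of_eq hpath.continuousWithinAt hmaps hpath0
  have := left_nhdsWithin_Ioo_neBot (zero_lt_one' ℝ)
  obtain ⟨l, hgl, hl⟩ :=
    ((hcomp.eventually (lt_mem_nhds (by simpa [hpath0] using hc))).and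
      self_mem_nhdsWithin).exists
  exact ⟨path l, hmaps hl, hf a ha b hb (f a) le_rfl hab l hl.1 hl.2, hgl⟩

section

variable {E F : Type*} {S : Set E} {T : Set F} {U V : E → F → ℝ} {n : ℕ}

theorem ParetoOptimalFixed.snd_lt_of_fst_lt {s s' : E} {t t' : F}
    (hPO : ParetoOptimalFixed S T U V s t)
    (hs' : s' ∈ S) (ht' : t' ∈ T) (hU : U s t < U s' t') : V s' t' < V s t :=
  lt_of_not_ge fun hV => hPO ⟨s', hs', t', ht', hU.le, hV, Or.inl hU⟩

theorem ParetoOptimalFixed.fst_lt_of_snd_lt {s s' : E} {t t' : F}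
    (hPO : ParetoOptimalFixed S T U V s t)
    (hs' : s' ∈ S) (ht' : t' ∈ T) (hV : V s t < V s' t') : U s' t' < U s t :=
  lt_of_not_ge fun hU => hPO ⟨s', hs', t', ht', hU, hV.le, Or.inr hV⟩

theorem ParetoOptimalFixed.extStableFixed_const {s : E} {t : F}
    (hPO : ParetoOptimalFixed S T U V s t)
    (μ : Equiv.Perm (Fin n)) : ExtStableFixed S T U V μ (fun _ => s) (fun _ => t) :=
  fun _ _ _ s' hs' t' ht' h => hPO ⟨s', hs', t', ht', h.1.le, h.2.le, Or.inl h.1⟩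

theorem not_extStableFixed_update_const_left (hn : 2 ≤ n) (μ : Equiv.Perm (Fin n))
    (i : Fin n) {s s' s'' : E} {t t'' : F} (hs'' : s'' ∈ S) (ht'' : t'' ∈ T)
    (hU : U s t < U s'' t'') (hV : V s' t < V s'' t'') :
    ¬ ExtStableFixed S T U V μ (Function.update (fun _ => s) i s') (fun _ => t) := by
  have : Nontrivial (Fin n) := Fin.nontrivial_iff_two_le.mpr hn
  obtain ⟨i', hi'⟩ := exists_ne i
  refine fun hExt => hExt i' (μ i) (μ.injective.ne hi') s'' hs'' t'' ht'' ⟨?_, ?_⟩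
  · simpa [Function.update_of_ne hi'] using hU
  · simpa using hV

theorem not_extStableFixed_update_const_right (hn : 2 ≤ n) (μ : Equiv.Perm (Fin n))
    (j : Fin n) {s s'' : E} {t t' t'' : F} (hs'' : s'' ∈ S) (ht'' : t'' ∈ T)
    (hU : U s t' < U s'' t'') (hV : V s t < V s'' t'') :
    ¬ ExtStableFixed S T U V μ (fun _ => s) (Function.update (fun _ => t) j t') := by
  have : Nontrivial (Fin n) := Fin.nontrivial_iff_two_le.mpr hn
  obtain ⟨j', hj'⟩ := exists_ne j
  refine fun hExt => hExt (μ.symm j) j' (by simpa using hj'.symm) s'' hs'' t'' ht'' ⟨?_, ?_⟩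
  · simpa using hU
  · simpa [Function.update_of_ne hj'] using hV

end

theorem pareto_profile_is_stable_general
    {E F : Type*} [AddCommGroup E] [Module ℝ E] [TopologicalSpace E]
    [IsTopologicalAddGroup E] [ContinuousSMul ℝ E]
    [AddCommGroup F] [Module ℝ F] [TopologicalSpace F]
    [IsTopologicalAddGroup F] [ContinuousSMul ℝ F]
    (S : Set E) (T : Set F) (hSc : Convex ℝ S) (hTc : Convex ℝ T)
    (U V : E → F → ℝ)
    (hUcont : ContinuousOn (fun p : E × F => U p.1 p.2) (S ×ˢ T))
    (hVcont : ContinuousOn (fun p : E × F => V p.1 p.2) (S ×ˢ T))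
    (hUq : ∀ t ∈ T, QConcaveOn S (fun s => U s t))
    (hVq : ∀ s ∈ S, QConcaveOn T (fun t => V s t))
    (n : ℕ) (hn : 2 ≤ n) (μ : Equiv.Perm (Fin n))
    (s : E) (t : F) (hs : s ∈ S) (ht : t ∈ T)
    (hPO : ParetoOptimalFixed S T U V s t) :
    ExtStableFixed S T U V μ (fun _ => s) (fun _ => t) ∧
    IntStableFixed S T U V μ (fun _ => s) (fun _ => t) := by
  refine ⟨hPO.extStableFixed_const μ, fun i s' hs' hU => ?_, fun j t' ht' hV => ?_⟩
  · have hVt : ContinuousOn (fun s'' => V s'' t) S :=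
      hVcont.comp (Continuous.prodMk_left t).continuousOn fun _ h => ⟨h, ht⟩
    obtain ⟨z, hz, hUz, hVz⟩ := (hUq t ht).exists_gt_of_continuousOn hSc hVt hs hs' hU
      (hPO.snd_lt_of_fst_lt hs' ht hU)
    exact not_extStableFixed_update_const_left hn μ i hz ht hUz hVz
  · have hUs : ContinuousOn (fun t'' => U s t'') T :=
      hUcont.comp (Continuous.prodMk_right s).continuousOn fun _ h => ⟨hs, h⟩
    obtain ⟨z, hz, hVz, hUz⟩ := (hVq s hs).exists_gt_of_continuousOn hTc hUs ht ht' hV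
      (hPO.fst_lt_of_snd_lt hs ht' hV)
    exact not_extStableFixed_update_const_right hn μ j hs hz hUz hVz

/-- If `(s,t)` is Pareto optimal in the fixed game `G`, then for any matching `μ`
the matching profile where every couple plays `(s,t)` is externally and internally
stable. -/
theorem pareto_profile_is_stable
    {E F : Type*} [AddCommGroup E] [Module ℝ E] [TopologicalSpace E]
    [IsTopologicalAddGroup E] [ContinuousSMul ℝ E]
    [AddCommGroup F] [Module ℝ F] [TopologicalSpace F]
    [IsTopologicalAddGroup F] [ContinuousSMul ℝ F]
    (S : Set E) (T : Set F) (hSc : Convex ℝ S) (hTc : Convex ℝ T)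
    (hSne : S.Nonempty) (hTne : T.Nonempty)
    (U V : E → F → ℝ)
    (hUcont : ContinuousOn (fun p : E × F => U p.1 p.2) (S ×ˢ T))
    (hVcont : ContinuousOn (fun p : E × F => V p.1 p.2) (S ×ˢ T))
    (hUq : ∀ t ∈ T, QConcaveOn S (fun s => U s t))
    (hVq : ∀ s ∈ S, QConcaveOn T (fun t => V s t))
    (n : ℕ) (hn : 2 ≤ n) (μ : Equiv.Perm (Fin n))
    (s : E) (t : F) (hs : s ∈ S) (ht : t ∈ T)
    (hPO : ParetoOptimalFixed S T U V s t) :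
    ExtStableFixed S T U V μ (fun _ => s) (fun _ => t) ∧
    IntStableFixed S T U V μ (fun _ => s) (fun _ => t) :=
  pareto_profile_is_stable_general S T hSc hTc U V hUcont hVcont hUq hVq n hn μ s t hs ht hPO
end

section
/- In the fixed-game matching setting, assume S and T are nonempty convex subsets of real topological vector spaces, U and V are continuous, U(·,t) is q-concave for every t ∈ T, and V(s,·) is q-concave for every s ∈ S. If (μ,x,y) is an externally stable and internally stable matching profile, then there exists i₀ ∈ M such that for every i ∈ M with i ≠ i₀, the profile (x_i, y_{μ_i}) played by the couple (i,μ_i) is not strictly Pareto dominated in G. -/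
/-- A profile `(s,t)` is strictly Pareto dominated in the fixed game over `S × T`. -/
def StrictlyParetoDominated {E F : Type*} (S : Set E) (T : Set F) (U V : E → F → ℝ)
    (s : E) (t : F) : Prop :=
  ∃ s' ∈ S, ∃ t' ∈ T, U s t < U s' t' ∧ V s t < V s' t'

/-! If two distinct couples `i` and `j` were strictly Pareto dominated, by `(s, t)` and
`(s', t')`, then external stability against the blocking pair formed by `i` and `j`'s
partner playing `(s, t)` forces `V (s, t)` below the payoff of `j`'s partner, hence that
payoff exceeds the payoff of `i`'s partner; the symmetric argument gives the reverse strict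
inequality. -/

namespace ExtStableFixed

variable {E F : Type*} {S : Set E} {T : Set F} {U V : E → F → ℝ} {n : ℕ}
  {μ : Equiv.Perm (Fin n)} {x : Fin n → E} {y : Fin n → F}

theorem snd_le_of_fst_lt (hext : ExtStableFixed S T U V μ x y) {i j : Fin n} (hij : i ≠ j)
    {s : E} (hs : s ∈ S) {t : F} (ht : t ∈ T) (hU : U (x i) (y (μ i)) < U s t) :
    V s t ≤ V (x j) (y (μ j)) := by
  have hblock := hext i (μ j) (μ.injective.ne hij) s hs t ht
  rw [Equiv.symm_apply_apply] at hblock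
  exact not_lt.mp fun hV => hblock ⟨hU, hV⟩

theorem eq_of_strictlyParetoDominated (hext : ExtStableFixed S T U V μ x y) {i j : Fin n}
    (hi : StrictlyParetoDominated S T U V (x i) (y (μ i)))
    (hj : StrictlyParetoDominated S T U V (x j) (y (μ j))) : i = j := by
  by_contra hij
  obtain ⟨s, hs, t, ht, hUi, hVi⟩ := hi
  obtain ⟨s', hs', t', ht', hUj, hVj⟩ := hj
  have hVj_ge := hext.snd_le_of_fst_lt hij hs ht hUi
  have hVi_ge := hext.snd_le_of_fst_lt (Ne.symm hij) hs' ht' hUj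
  linarith

end ExtStableFixed

theorem stable_implies_almost_all_pareto_general
    {E F : Type*}
    (S : Set E) (T : Set F)
    (U V : E → F → ℝ)
    (n : ℕ) (hn : 2 ≤ n) (μ : Equiv.Perm (Fin n))
    (x : Fin n → E) (y : Fin n → F)
    (hext : ExtStableFixed S T U V μ x y) :
    ∃ i₀ : Fin n, ∀ i : Fin n, i ≠ i₀ →
      ¬ StrictlyParetoDominated S T U V (x i) (y (μ i)) := by
  by_cases hdom : ∃ i₀, StrictlyParetoDominated S T U V (x i₀) (y (μ i₀))
  · obtain ⟨i₀, hi₀⟩ := hdom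
    exact ⟨i₀, fun i hi hi_dom => hi (hext.eq_of_strictlyParetoDominated hi_dom hi₀)⟩
  · exact ⟨⟨0, by omega⟩, fun i _ => not_exists.mp hdom i⟩

/-- If `(μ,x,y)` is an externally and internally stable matching profile of the
fixed-game matching setting, then all matched couples, except at most one, play a
profile that is not strictly Pareto dominated. -/
theorem stable_implies_almost_all_pareto
    {E F : Type*} [AddCommGroup E] [Module ℝ E] [TopologicalSpace E]
    [IsTopologicalAddGroup E] [ContinuousSMul ℝ E]
    [AddCommGroup F] [Module ℝ F] [TopologicalSpace F]
    [IsTopologicalAddGroup F] [ContinuousSMul ℝ F]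
    (S : Set E) (T : Set F) (hSc : Convex ℝ S) (hTc : Convex ℝ T)
    (hSne : S.Nonempty) (hTne : T.Nonempty)
    (U V : E → F → ℝ)
    (hUcont : ContinuousOn (fun p : E × F => U p.1 p.2) (S ×ˢ T))
    (hVcont : ContinuousOn (fun p : E × F => V p.1 p.2) (S ×ˢ T))
    (hUq : ∀ t ∈ T, QConcaveOn S (fun s => U s t))
    (hVq : ∀ s ∈ S, QConcaveOn T (fun t => V s t))
    (n : ℕ) (hn : 2 ≤ n) (μ : Equiv.Perm (Fin n))
    (x : Fin n → E) (y : Fin n → F)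
    (hx : ∀ i, x i ∈ S) (hy : ∀ j, y j ∈ T)
    (hext : ExtStableFixed S T U V μ x y)
    (hint : IntStableFixed S T U V μ x y) :
    ∃ i₀ : Fin n, ∀ i : Fin n, i ≠ i₀ →
      ¬ StrictlyParetoDominated S T U V (x i) (y (μ i)) :=
  stable_implies_almost_all_pareto_general S T U V n hn μ x y hext
end
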